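/- arXiv:math/0512060 — 4 statements merged into one kernel-verified Lean document; each statement's English description precedes it below -/
import Mathlib

section
/- (The Hamburger Theorem) Let H be a hamburger graph with parameter k, let c^+ and c^- be respectively the number of positive and negative cycle systems of H, and let M_H be its hamburger matrix. Then det M_H = c^+ - c^-. -/
/-- `p` is (the list of vertices of) a directed path with no repeated vertices
from `a` to `b` in the digraph on `V` with edge relation `R`. -/
def IsDirPath {V : Type} (R : V → V → Prop) (a b : V) (p : List V) : Prop :=
  p.Chain' R ∧ p.head? = some a ∧ p.getLast? = some b ∧ p.Nodup

/-- The number of directed paths from `a` to `b` in the digraph with edge relation `R`. -/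
noncomputable def numPaths {V : Type} (R : V → V → Prop) (a b : V) : ℕ :=
  Nat.card {p : List V // IsDirPath R a b p}

/-- `p` is the list of vertices of a directed cycle: the vertices are pairwise distinct,
consecutive vertices are joined by edges, and there is an edge from the last vertex
back to the first one. -/
def IsCycleList {V : Type} (R : V → V → Prop) : List V → Prop
  | [] => False
  | a :: l => (a :: l).Nodup ∧ List.Chain R a (l ++ [a])

/-- A hamburger graph with parameter `k`: two finite acyclic digraphs `G1 = (V1, E1)`
and `G2 = (V2, E2)` on disjoint vertex sets, with distinguished vertices
`v 0, …, v (k-1)` in `G1` (corresponding to `v_1, …, v_k`) and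
`w 0, …, w (k-1)` in `G2` (corresponding to `w_{k+1}, …, w_{2k}`), such that `G1` has a
directed path from `v i` to `v j` only if `i < j` (or `i = j`), `G2` has a directed path
from `w i` to `w j` only if `i > j` (or `i = j`); the connecting edges are added
in the definition of the total edge relation `Hamburger.E` below. -/
structure Hamburger (k : ℕ) where
  V1 : Type
  V2 : Type
  [fin1 : Fintype V1]
  [fin2 : Fintype V2]
  [dec1 : DecidableEq V1]
  [dec2 : DecidableEq V2]
  E1 : V1 → V1 → Prop
  E2 : V2 → V2 → Prop
  v : Fin k → V1
  w : Fin k → V2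
  v_inj : Function.Injective v
  w_inj : Function.Injective w
  acyclic1 : ∀ p : List V1, ¬ IsCycleList E1 p
  acyclic2 : ∀ p : List V2, ¬ IsCycleList E2 p
  path1 : ∀ i j : Fin k, i ≠ j → (∃ p, IsDirPath E1 (v i) (v j) p) → i < j
  path2 : ∀ i j : Fin k, i ≠ j → (∃ p, IsDirPath E2 (w i) (w j) p) → j < i

attribute [instance] Hamburger.fin1 Hamburger.fin2 Hamburger.dec1 Hamburger.dec2

/-- The edge relation of the hamburger graph `H` on the disjoint union of the two
vertex sets: the edges of `G1`, the edges of `G2`, and the connecting edge set `E3`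
consisting of the edges `e i : v i → w i` and `e' i : w i → v i` for each `i`. -/
def Hamburger.E {k : ℕ} (H : Hamburger k) : H.V1 ⊕ H.V2 → H.V1 ⊕ H.V2 → Prop
  | .inl a, .inl b => H.E1 a b
  | .inr a, .inr b => H.E2 a b
  | .inl a, .inr b => ∃ i, a = H.v i ∧ b = H.w i
  | .inr a, .inl b => ∃ i, a = H.w i ∧ b = H.v i

/-- A cycle system of the hamburger graph `H`: a collection of pairwise vertex-disjoint
directed cycles, encoded by the set `S` of visited vertices together with the
permutation of `S` sending each visited vertex to the next vertex of its cycle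
(the successor being joined to it by an edge of `H`). -/
structure CycleSystem {k : ℕ} (H : Hamburger k) where
  S : Finset (H.V1 ⊕ H.V2)
  f : {x // x ∈ S} ≃ {x // x ∈ S}
  hrel : ∀ x : {x // x ∈ S}, H.E x.1 (f x).1

/-- `C.l` : the number of edges of the cycle system `C` going from `G2` to `G1`. -/
noncomputable def CycleSystem.l {k : ℕ} {H : Hamburger k} (C : CycleSystem H) : ℕ :=
  (Finset.univ.filter fun x : {x // x ∈ C.S} =>
    (x.1.isRight && (C.f x).1.isLeft) = true).card

/-- `C.m` : the number of cycles of the cycle system `C`. -/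
noncomputable def CycleSystem.m {k : ℕ} {H : Hamburger k} (C : CycleSystem H) : ℕ :=
  (Equiv.Perm.cycleType C.f).card

/-- The sign `(-1) ^ (l + m)` of a cycle system. -/
noncomputable def CycleSystem.sign {k : ℕ} {H : Hamburger k} (C : CycleSystem H) : ℤ :=
  (-1) ^ (C.l + C.m)

/-- The hamburger matrix of `H`: the `2k × 2k` block matrix `[[A, I], [-I, B]]` where
`A i j` is the number of directed paths from `v i` to `v j` in `G1` and `B i j` is the
number of directed paths from `w i` to `w j` in `G2`. -/
noncomputable def hamMatrix {k : ℕ} (H : Hamburger k) :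
    Matrix (Fin k ⊕ Fin k) (Fin k ⊕ Fin k) ℤ :=
  Matrix.fromBlocks
    (Matrix.of fun i j => (numPaths H.E1 (H.v i) (H.v j) : ℤ)) 1 (-1)
    (Matrix.of fun i j => (numPaths H.E2 (H.w i) (H.w j) : ℤ))


/-!
Weight the edges of `H` by `-1` on the edges `w_{k+i} → v_i` and by `1` on all others, and let
`W` be the weighted adjacency matrix. In the Leibniz expansion of `det (1 - W)` only the
permutations moving each vertex along an edge survive; these are the cycle systems, and the term
of a cycle system is exactly its sign `(-1) ^ (l + m)`.

On the other hand, for an acyclic digraph the inverse of `1 - adjacency` is the matrix counting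
paths (a path either stops or leaves along a first edge), and `det (1 - adjacency) = 1`. Taking
Schur complements of the two diagonal blocks of `1 - W`, whose off-diagonal blocks factor through
the distinguished vertices, reduces `det (1 - W)` to `det (1 + B * A) = det M_H`.
-/

open scoped Matrix

section Paths

variable {V : Type} {R : V → V → Prop} {a b c : V} {p : List V}

theorem IsDirPath.exists_eq_cons (h : IsDirPath R a b p) : ∃ t, p = a :: t := by
  obtain ⟨-, hhead, -⟩ := h
  cases p with
  | nil => simp at hhead
  | cons x t => exact ⟨t, by simp_all⟩

theorem isDirPath_singleton (a : V) : IsDirPath R a a [a] :=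
  ⟨List.isChain_singleton a, rfl, rfl, List.nodup_singleton a⟩

theorem IsDirPath.eq_singleton (h : IsDirPath R a a p) : p = [a] := by
  obtain ⟨t, rfl⟩ := h.exists_eq_cons
  obtain ⟨-, -, hlast, hnodup⟩ := h
  cases t with
  | nil => rfl
  | cons y t =>
    rw [List.getLast?_cons_cons] at hlast
    exact absurd (List.mem_of_getLast? hlast) (List.nodup_cons.mp hnodup).1

theorem IsDirPath.cons (hp : IsDirPath R c b p) (hac : R a c) (ha : a ∉ p) :
    IsDirPath R a b (a :: p) := by
  obtain ⟨t, rfl⟩ := hp.exists_eq_cons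
  obtain ⟨hchain, -, hlast, hnodup⟩ := hp
  exact ⟨List.isChain_cons_cons.mpr ⟨hac, hchain⟩, rfl, by rwa [List.getLast?_cons_cons],
    List.nodup_cons.mpr ⟨ha, hnodup⟩⟩

theorem IsDirPath.of_cons_cons {t : List V} (hp : IsDirPath R a b (a :: c :: t)) :
    R a c ∧ IsDirPath R c b (c :: t) := by
  obtain ⟨hchain, -, hlast, hnodup⟩ := hp
  rw [List.Chain', List.isChain_cons_cons] at hchain
  exact ⟨hchain.1, hchain.2, rfl, by rwa [List.getLast?_cons_cons] at hlast,
    (List.nodup_cons.mp hnodup).2⟩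

theorem IsDirPath.isCycleList_cons_dropLast (hp : IsDirPath R c a p) (hac : R a c) :
    IsCycleList R (a :: p.dropLast) := by
  obtain ⟨t, rfl⟩ := hp.exists_eq_cons
  obtain ⟨hchain, -, hlast, hnodup⟩ := hp
  have hsplit : (c :: t).dropLast ++ [a] = c :: t := List.dropLast_append_getLast? a hlast
  rw [← hsplit, List.nodup_append] at hnodup
  refine ⟨List.nodup_cons.mpr ⟨fun ha => hnodup.2.2 _ ha _ (List.mem_singleton_self a) rfl,
    hnodup.1⟩, ?_⟩
  rw [hsplit]
  exact List.isChain_cons_cons.mpr ⟨hac, hchain⟩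

theorem not_rel_self_of_acyclic (hR : ∀ q : List V, ¬ IsCycleList R q) (a : V) : ¬ R a a :=
  fun h => hR [a] ⟨List.nodup_singleton a, List.isChain_pair.mpr h⟩

theorem IsDirPath.not_mem_of_rel (hR : ∀ q : List V, ¬ IsCycleList R q)
    (hp : IsDirPath R c b p) (hac : R a c) : a ∉ p := by
  intro ha
  obtain ⟨q₁, q₂, rfl⟩ := List.append_of_mem ha
  obtain ⟨hchain, hhead, -, hnodup⟩ := hp
  have hprefix : IsDirPath R c a (q₁ ++ [a]) := by
    refine ⟨hchain.prefix ⟨q₂, by simp⟩, ?_, List.getLast?_concat, ?_⟩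
    · cases q₁ <;> simpa using hhead
    · exact hnodup.sublist (by simp)
  exact hR _ (hprefix.isCycleList_cons_dropLast hac)

instance [Fintype V] (R : V → V → Prop) (a b : V) : Finite {p : List V // IsDirPath R a b p} :=
  Finite.of_injective (fun p => (⟨p.1, p.2.2.2.2⟩ : {l : List V // l.Nodup}))
    fun _ _ h => Subtype.ext (congrArg Subtype.val h :)

theorem numPaths_self : numPaths R a a = 1 :=
  Nat.card_eq_one_iff_exists.mpr
    ⟨⟨[a], isDirPath_singleton a⟩, fun p => Subtype.ext p.2.eq_singleton⟩

theorem numPaths_eq_zero_of_rel (hR : ∀ q : List V, ¬ IsCycleList R q) (hba : R b a) :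
    numPaths R a b = 0 := by
  have : IsEmpty {p : List V // IsDirPath R a b p} :=
    ⟨fun p => p.2.not_mem_of_rel hR hba (List.mem_of_getLast? p.2.2.2.1)⟩
  exact Nat.card_of_isEmpty

noncomputable def dirPathConsEquiv (hR : ∀ q : List V, ¬ IsCycleList R q) (hab : a ≠ b) :
    (Σ c : {c // R a c}, {q : List V // IsDirPath R c b q}) ≃
      {p : List V // IsDirPath R a b p} :=
  Equiv.ofBijective
    (fun x => ⟨a :: x.2.1, x.2.2.cons x.1.2 (x.2.2.not_mem_of_rel hR x.1.2)⟩) <| by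
    constructor
    · rintro ⟨⟨c, hc⟩, q, hq⟩ ⟨⟨c', hc'⟩, q', hq'⟩ h
      obtain rfl : q = q' := List.cons_injective (congrArg Subtype.val h)
      obtain rfl : c = c' := Option.some.inj (hq.2.1.symm.trans hq'.2.1)
      rfl
    · rintro ⟨p, hp⟩
      obtain ⟨_ | ⟨c, t⟩, rfl⟩ := hp.exists_eq_cons
      · exact absurd (by simpa using hp.2.2.1) hab
      · exact ⟨⟨⟨c, hp.of_cons_cons.1⟩, c :: t, hp.of_cons_cons.2⟩, rfl⟩

theorem numPaths_eq_sum_of_ne [Fintype V] [DecidablePred (R a)]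
    (hR : ∀ q : List V, ¬ IsCycleList R q) (hab : a ≠ b) :
    numPaths R a b = ∑ c ∈ Finset.univ.filter (R a), numPaths R c b := by
  rw [numPaths, ← Nat.card_congr (dirPathConsEquiv hR hab), Nat.card_sigma]
  exact (Finset.sum_subtype _ (by simp) (fun c => numPaths R c b)).symm

end Paths

theorem Equiv.Perm.isCycleList_toList {X : Type} [Fintype X] [DecidableEq X]
    {R : X → X → Prop} {σ : Equiv.Perm X} {x : X} (hx : σ x ≠ x)
    (hσ : ∀ y, σ y ≠ y → R y (σ y)) : IsCycleList R (σ.toList x) := by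
  set n := (σ.cycleOf x).support.card
  have hx' : x ∈ σ.support := Equiv.Perm.mem_support.mpr hx
  have hn : σ^[n] x = x := by
    rw [Equiv.Perm.iterate_eq_pow, ← Equiv.Perm.pow_mod_card_support_cycleOf_self_apply,
      Nat.mod_self, pow_zero, Equiv.Perm.one_apply]
  have htoList : σ.toList x = List.iterate σ x n := rfl
  have hclosed : σ.toList x ++ [x] = List.iterate σ x (n + 1) := by
    rw [List.iterate_add, htoList, hn]
    rfl
  obtain ⟨m, hm⟩ : ∃ m, n = m + 1 := Nat.exists_eq_add_one.mpr <| by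
    simpa only [htoList, List.length_iterate] using σ.length_toList_pos_of_mem_support x hx'
  have ht : σ.toList x = x :: List.iterate σ (σ x) m := by rw [htoList, hm]; rfl
  rw [ht]
  refine ⟨ht ▸ σ.nodup_toList x, ?_⟩
  rw [List.Chain, ← List.cons_append, ← ht, hclosed, List.isChain_iff_getElem]
  intro i _
  simp only [List.getElem_iterate, Function.iterate_succ_apply']
  refine hσ _ (Equiv.Perm.mem_support.mp ?_)
  rwa [Equiv.Perm.iterate_eq_pow, Equiv.Perm.pow_apply_mem_support]

namespace Matrix

variable {m n ι R : Type*} [Fintype m] [Fintype n] [Fintype ι] [DecidableEq m] [DecidableEq n]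
  [DecidableEq ι] [CommRing R]

theorem det_one_sub_eq_sum_perm (M : Matrix m m R) (hM : ∀ x, M x x = 0) :
    (1 - M).det =
      ∑ σ : Equiv.Perm m, Equiv.Perm.sign σ • ∏ x ∈ σ.support, -M x (σ x) := by
  rw [← det_transpose, det_apply]
  refine Finset.sum_congr rfl fun σ _ => congrArg _ ?_
  rw [← Finset.prod_subset σ.support.subset_univ fun x _ hx => ?_]
  · refine Finset.prod_congr rfl fun x hx => ?_
    simp [Ne.symm (Equiv.Perm.mem_support.mp hx)]
  · simp [Equiv.Perm.notMem_support.mp hx, hM]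

theorem det_one_sub_eq_sum_perm_of_rel (M : Matrix m m R) {r : m → m → Prop} [DecidableRel r]
    (hirr : ∀ x, ¬ r x x) (hM : ∀ x y, ¬ r x y → M x y = 0) :
    (1 - M).det = ∑ σ : {σ : Equiv.Perm m // ∀ x, σ x ≠ x → r x (σ x)},
      Equiv.Perm.sign σ.1 • ∏ x ∈ σ.1.support, -M x (σ.1 x) := by
  rw [M.det_one_sub_eq_sum_perm fun x => hM x x (hirr x),
    ← Finset.sum_filter_of_ne (p := fun σ => ∀ x, σ x ≠ x → r x (σ x))
      fun σ _ hσ x hx => by_contra fun h => hσ ?_]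
  · exact Finset.sum_subtype _ (by simp) _
  · exact smul_eq_zero_of_right _ <|
      Finset.prod_eq_zero (Equiv.Perm.mem_support.mpr hx) (by rw [hM _ _ h, neg_zero])

theorem det_fromBlocks_zero_neg_one_one_zero :
    (fromBlocks 0 (-1) 1 0 : Matrix (n ⊕ n) (n ⊕ n) R).det = 1 := by
  have hfactor : (fromBlocks 0 (-1) 1 0 : Matrix (n ⊕ n) (n ⊕ n) R) =
      fromBlocks 1 (-1) 0 1 * fromBlocks 1 0 1 1 * fromBlocks 1 (-1) 0 1 := by
    simp [fromBlocks_multiply]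
  simp [hfactor]

theorem det_fromBlocks_one_neg_one (A B : Matrix n n R) :
    (fromBlocks A 1 (-1) B).det = (1 + B * A).det := by
  have h : fromBlocks A 1 (-1) B * fromBlocks 0 (-1) 1 0 = fromBlocks 1 (-A) B 1 := by
    simp [fromBlocks_multiply]
  rw [← mul_one (fromBlocks A 1 (-1) B).det,
    ← det_fromBlocks_zero_neg_one_one_zero (n := n) (R := R), ← det_mul, h,
    det_fromBlocks_one₁₁, Matrix.mul_neg, sub_neg_eq_add]

theorem det_fromBlocks_neg_mul_transpose {P NP : Matrix m m R} {Q NQ : Matrix n n R}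
    (hP : P * NP = 1) (hQ : Q * NQ = 1) (U : Matrix m ι R) (W : Matrix n ι R) :
    (fromBlocks P (-(U * Wᵀ)) (W * Uᵀ) Q).det =
      P.det * Q.det * (1 + (Wᵀ * NQ * W) * (Uᵀ * NP * U)).det := by
  let := invertibleOfRightInverse P NP hP
  have hschur : Q - W * Uᵀ * ⅟P * -(U * Wᵀ) = Q * (1 + NQ * W * (Uᵀ * NP * U) * Wᵀ) := by
    rw [invOf_eq_right_inv hP, Matrix.mul_add, Matrix.mul_one, Matrix.mul_neg, sub_neg_eq_add,
      show NQ * W * (Uᵀ * NP * U) * Wᵀ = NQ * (W * Uᵀ * NP * (U * Wᵀ)) by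
        simp only [Matrix.mul_assoc],
      ← Matrix.mul_assoc Q, hQ, Matrix.one_mul]
  rw [det_fromBlocks₁₁, hschur, det_mul, det_one_add_mul_comm, mul_assoc]
  simp only [Matrix.mul_assoc]

end Matrix

section RelMatrix

variable {V : Type} [Fintype V] [DecidableEq V] (R : V → V → Prop) [DecidableRel R]

def relMatrix : Matrix V V ℤ := Matrix.of fun a b => if R a b then 1 else 0

noncomputable def pathMatrix : Matrix V V ℤ := Matrix.of fun a b => (numPaths R a b : ℤ)

variable {R}

theorem one_sub_relMatrix_mul_pathMatrix (hR : ∀ q : List V, ¬ IsCycleList R q) :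
    (1 - relMatrix R) * pathMatrix R = 1 := by
  ext a b
  have hsum : ((relMatrix R * pathMatrix R) a b : ℤ) =
      ∑ c ∈ Finset.univ.filter (R a), (numPaths R c b : ℤ) := by
    simp [Matrix.mul_apply, relMatrix, pathMatrix, Finset.sum_filter]
  rw [Matrix.sub_mul, Matrix.one_mul, Matrix.sub_apply, hsum, Matrix.one_apply]
  by_cases hab : a = b
  · subst hab
    rw [if_pos rfl, Finset.sum_eq_zero fun c hc =>
      by rw [numPaths_eq_zero_of_rel hR (Finset.mem_filter.mp hc).2, Nat.cast_zero]]
    simp [pathMatrix, numPaths_self]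
  · simp [pathMatrix, numPaths_eq_sum_of_ne hR hab, hab]

theorem det_one_sub_relMatrix (hR : ∀ q : List V, ¬ IsCycleList R q) :
    (1 - relMatrix R).det = 1 := by
  rw [(relMatrix R).det_one_sub_eq_sum_perm_of_rel (not_rel_self_of_acyclic hR)
      fun _ _ h => if_neg h,
    Fintype.sum_eq_single ⟨1, by simp⟩ fun σ hσ => ?_]
  · simp
  obtain ⟨x, hx⟩ : ∃ x, σ.1 x ≠ x := by
    by_contra! h
    exact hσ (Subtype.ext (Equiv.ext h))
  exact absurd (σ.1.isCycleList_toList hx σ.2) (hR _)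

end RelMatrix

section IncMatrix

variable {V W ι : Type} [DecidableEq V] [DecidableEq W]

def incMatrix (f : ι → V) : Matrix V ι ℤ := Matrix.of fun a i => if a = f i then 1 else 0

theorem incMatrix_mul_transpose_apply [Fintype ι] {f : ι → V} (hf : Function.Injective f)
    (g : ι → W) (a : V) (b : W) :
    (incMatrix f * (incMatrix g)ᵀ) a b = if ∃ i, a = f i ∧ b = g i then 1 else 0 := by
  simp only [Matrix.mul_apply, incMatrix, Matrix.transpose_apply, Matrix.of_apply, mul_ite,
    mul_one, mul_zero]
  split_ifs with h
  · obtain ⟨i, rfl, rfl⟩ := h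
    rw [Finset.sum_eq_single i (fun j _ hj => by simp [hf.ne (Ne.symm hj)]) (by simp)]
    simp
  · exact Finset.sum_eq_zero fun i _ => by grind

theorem transpose_incMatrix_mul_mul_incMatrix [Fintype V] [Fintype W] (M : Matrix V W ℤ)
    (f : ι → V) (g : ι → W) : (incMatrix f)ᵀ * M * incMatrix g = M.submatrix f g := by
  ext i j
  simp [Matrix.mul_apply, incMatrix]

end IncMatrix

namespace Hamburger

open scoped Classical

variable {k : ℕ} (H : Hamburger k)

theorem not_E_self (x : H.V1 ⊕ H.V2) : ¬ H.E x x := by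
  cases x with
  | inl a => exact not_rel_self_of_acyclic H.acyclic1 a
  | inr b => exact not_rel_self_of_acyclic H.acyclic2 b

noncomputable def signedAdj : Matrix (H.V1 ⊕ H.V2) (H.V1 ⊕ H.V2) ℤ :=
  Matrix.of fun x y => if H.E x y then if x.isRight && y.isLeft then -1 else 1 else 0

theorem one_sub_signedAdj :
    1 - H.signedAdj = Matrix.fromBlocks (1 - relMatrix H.E1)
      (-(incMatrix H.v * (incMatrix H.w)ᵀ)) (incMatrix H.w * (incMatrix H.v)ᵀ)
      (1 - relMatrix H.E2) := by
  ext (a | b) (a' | b') <;>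
    simp [signedAdj, Hamburger.E, relMatrix, Matrix.one_apply,
      incMatrix_mul_transpose_apply H.v_inj, incMatrix_mul_transpose_apply H.w_inj]
  split_ifs <;> rfl

theorem det_one_sub_signedAdj : (1 - H.signedAdj).det = (hamMatrix H).det := by
  rw [one_sub_signedAdj, Matrix.det_fromBlocks_neg_mul_transpose
    (one_sub_relMatrix_mul_pathMatrix H.acyclic1) (one_sub_relMatrix_mul_pathMatrix H.acyclic2),
    det_one_sub_relMatrix H.acyclic1, det_one_sub_relMatrix H.acyclic2,
    transpose_incMatrix_mul_mul_incMatrix, transpose_incMatrix_mul_mul_incMatrix, hamMatrix,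
    Matrix.det_fromBlocks_one_neg_one, one_mul, one_mul]
  rfl

end Hamburger

namespace CycleSystem

open Equiv

variable {k : ℕ} {H : Hamburger k} (C : CycleSystem H)

noncomputable def toPerm : Perm (H.V1 ⊕ H.V2) := Perm.ofSubtype C.f

theorem f_apply_ne (x : C.S) : C.f x ≠ x :=
  fun h => H.not_E_self x (congrArg Subtype.val h ▸ C.hrel x)

theorem support_f : Perm.support C.f = Finset.univ :=
  Finset.eq_univ_of_forall fun x => Perm.mem_support.mpr (C.f_apply_ne x)

theorem support_toPerm : C.toPerm.support = C.S := by
  ext x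
  rw [Perm.mem_support, toPerm]
  constructor
  · exact fun h => by_contra fun hx => h (Perm.ofSubtype_apply_of_not_mem C.f hx)
  · intro hx h
    rw [Perm.ofSubtype_apply_of_mem C.f hx] at h
    exact C.f_apply_ne ⟨x, hx⟩ (Subtype.ext h)

theorem E_toPerm_of_ne {x : H.V1 ⊕ H.V2} (hx : C.toPerm x ≠ x) : H.E x (C.toPerm x) := by
  have hxS : x ∈ C.S := C.support_toPerm ▸ Perm.mem_support.mpr hx
  simpa [toPerm, Perm.ofSubtype_apply_of_mem C.f hxS] using C.hrel ⟨x, hxS⟩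

theorem toPerm_injective : Function.Injective (toPerm : CycleSystem H → _) := by
  rintro ⟨S, f, hf⟩ ⟨S', f', hf'⟩ h
  have hS : S = S' := by simpa [support_toPerm] using congrArg Perm.support h
  subst hS
  obtain rfl : f = f' := Perm.ofSubtype_injective h
  rfl

theorem exists_toPerm_eq (σ : Perm (H.V1 ⊕ H.V2)) (hσ : ∀ x, σ x ≠ x → H.E x (σ x)) :
    ∃ C : CycleSystem H, C.toPerm = σ :=
  ⟨⟨σ.support, σ.subtypePerm fun _ => Perm.apply_mem_support,
      fun x => hσ x (Perm.mem_support.mp x.2)⟩,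
    Perm.ofSubtype_subtypePerm (fun _ => Perm.apply_mem_support)
      fun _ hx => Perm.mem_support.mpr hx⟩

noncomputable def equivPerm (H : Hamburger k) :
    CycleSystem H ≃ {σ : Perm (H.V1 ⊕ H.V2) // ∀ x, σ x ≠ x → H.E x (σ x)} :=
  Equiv.ofBijective (fun C => ⟨C.toPerm, fun _ => C.E_toPerm_of_ne⟩)
    ⟨fun _ _ h => toPerm_injective (congrArg Subtype.val h),
      fun σ => (exists_toPerm_eq σ.1 σ.2).imp fun _ h => Subtype.ext h⟩

open Classical in
noncomputable instance : Fintype (CycleSystem H) := Fintype.ofEquiv _ (equivPerm H).symm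

theorem prod_neg_signedAdj :
    ∏ x ∈ C.toPerm.support, -H.signedAdj x (C.toPerm x) = (-1) ^ (C.S.card + C.l) := by
  have hterm : ∀ x : C.S, H.signedAdj x (C.toPerm x) =
      if (x.1.isRight && (C.f x).1.isLeft) = true then -1 else 1 := fun x => by
    rw [toPerm, Perm.ofSubtype_apply_coe, Hamburger.signedAdj, Matrix.of_apply,
      if_pos (C.hrel x)]
  rw [support_toPerm, ← Finset.prod_coe_sort, Finset.prod_neg,
    Finset.prod_congr rfl fun x _ => hterm x, Finset.prod_ite, Finset.prod_const,
    Finset.prod_const, one_pow, mul_one, pow_add, Finset.card_univ, Fintype.card_coe]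
  rfl

theorem sign_toPerm : (Perm.sign C.toPerm : ℤ) = (-1) ^ (C.S.card + C.m) := by
  rw [toPerm, Perm.sign_ofSubtype, Perm.sign_of_cycleType, Perm.sum_cycleType, support_f,
    Finset.card_univ, Fintype.card_coe]
  push_cast
  rfl

theorem sign_eq_leibniz_term :
    C.sign = Perm.sign C.toPerm • ∏ x ∈ C.toPerm.support, -H.signedAdj x (C.toPerm x) := by
  rw [Units.smul_def, sign_toPerm, prod_neg_signedAdj, smul_eq_mul, ← pow_add, sign,
    show C.S.card + C.m + (C.S.card + C.l) = C.l + C.m + 2 * C.S.card by ring,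
    pow_add _ (C.l + C.m), pow_mul, neg_one_sq, one_pow, mul_one]

end CycleSystem

open Classical in
theorem Hamburger.det_one_sub_signedAdj_eq_sum_sign {k : ℕ} (H : Hamburger k) :
    (1 - H.signedAdj).det = ∑ C : CycleSystem H, C.sign := by
  rw [H.signedAdj.det_one_sub_eq_sum_perm_of_rel H.not_E_self fun _ _ h => if_neg h]
  exact (Fintype.sum_equiv (CycleSystem.equivPerm H) _ _ CycleSystem.sign_eq_leibniz_term).symm

theorem Fintype.sum_eq_card_sub_card_of_eq_one_or_eq_neg_one {α : Type*} [Fintype α]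
    (g : α → ℤ) (hg : ∀ a, g a = 1 ∨ g a = -1) :
    ∑ a, g a = (Nat.card {a // g a = 1} : ℤ) - (Nat.card {a // g a = -1} : ℤ) := by
  classical
  have hsplit : ∀ a, g a = (if g a = 1 then 1 else 0) - (if g a = -1 then 1 else 0) := fun a => by
    rcases hg a with h | h <;> simp [h]
  rw [Fintype.sum_congr _ _ hsplit, Finset.sum_sub_distrib, Finset.sum_boole, Finset.sum_boole,
    Nat.card_eq_fintype_card, Nat.card_eq_fintype_card, Fintype.card_subtype,
    Fintype.card_subtype]

theorem hamburger_theorem_general {k : ℕ} (H : Hamburger k) :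
    (hamMatrix H).det =
      (Nat.card {C : CycleSystem H // C.sign = 1} : ℤ) -
      (Nat.card {C : CycleSystem H // C.sign = -1} : ℤ) := by
  rw [← H.det_one_sub_signedAdj, H.det_one_sub_signedAdj_eq_sum_sign]
  exact Fintype.sum_eq_card_sub_card_of_eq_one_or_eq_neg_one _ fun C => neg_one_pow_eq_or ℤ _

/-- **The Hamburger Theorem.** If `H` is a hamburger graph with parameter `k`, then the
determinant of its hamburger matrix equals `c⁺ - c⁻`, where `c⁺` (resp. `c⁻`) is the
number of positive (resp. negative) cycle systems of `H`. -/
theorem hamburger_theorem {k : ℕ} (hk : 1 ≤ k) (H : Hamburger k) :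
    (hamMatrix H).det =
      (Nat.card {C : CycleSystem H // C.sign = 1} : ℤ) -
      (Nat.card {C : CycleSystem H // C.sign = -1} : ℤ) :=
  hamburger_theorem_general H
end

section
/- Every directed cycle in a hamburger graph H with parameter k is either a 2-cycle v_i → w_{k+i} → v_i for some 1 ≤ i ≤ k, or it decomposes as an alternating sequence P_1 → Q_1 → P_2 → Q_2 → ⋯ → P_l → Q_l (for some l ≥ 1), where each P_j is a directed path in G1, each Q_j is a directed path in G2, each P_j is joined to Q_j by an edge of the form v_i → w_{k+i}, each Q_j is joined to P_{j+1} by an edge of the form w_{k+i} → v_i, and the terminal vertex of Q_l is joined to the initial vertex of P_1 by an edge of the form w_{k+i} → v_i. -/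
/-- `p` is (the list of vertices of) a nonempty directed path in the digraph with edge
relation `R`. -/
def IsPathList {V : Type} (R : V → V → Prop) (p : List V) : Prop :=
  p ≠ [] ∧ p.Chain' R ∧ p.Nodup

/-!
The graphs `G1` and `G2` are acyclic, so a directed cycle of `H` visits both of them. Rotate it
so that it starts at a vertex of `G1` entered from `G2`; it then splits into maximal runs that
alternate between `G1` and `G2`, and consecutive runs (also the last and the first) are joined
by edges of `E3`. The 2-cycles `v_i → w_{k+i} → v_i` are the decompositions into the single
block `P = [v_i]`, `Q = [w_{k+i}]`.
-/

namespace Cycle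

variable {α : Type*} {R : α → α → Prop}

theorem chain_coe_iff {l : List α} :
    Chain R (l : Cycle α) ↔ l.IsChain R ∧ ∀ x ∈ l.getLast?, ∀ y ∈ l.head?, R x y := by
  cases l with
  | nil => simp
  | cons a t =>
    rw [chain_coe_cons, ← List.cons_append, List.isChain_append]
    simp

theorem chain_coe_flatten {L : List (List α)} (hL : [] ∉ L) :
    Chain R (L.flatten : Cycle α) ↔ (∀ l ∈ L, l.IsChain R) ∧
      Chain (fun l₁ l₂ => ∀ x ∈ l₁.getLast?, ∀ y ∈ l₂.head?, R x y)
        (L : Cycle (List α)) := by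
  rw [chain_coe_iff, chain_coe_iff, List.isChain_flatten hL, and_assoc]
  refine and_congr_right fun _ => and_congr_right fun _ => ?_
  rcases L with _ | ⟨l, L⟩
  · simp
  have hl : l ≠ [] := fun h => hL (h ▸ List.mem_cons_self)
  have hne : (l :: L).flatten ≠ [] := by simp [hl]
  have hhead : (l :: L).flatten.head? = l.head? := List.head?_append_of_ne_nil _ hl
  have hlast :
      (l :: L).flatten.getLast? = ((l :: L).getLast (List.cons_ne_nil _ _)).getLast? := by
    have hl' : (l :: L).getLast (List.cons_ne_nil _ _) ≠ [] :=
      fun h => hL (h ▸ List.getLast_mem _)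
    rw [List.getLast?_eq_some_getLast hne, List.getLast?_eq_some_getLast hl',
      List.getLast_flatten_eq_getLast_getLast hne hl']
  rw [hhead, hlast, List.getLast?_eq_some_getLast (List.cons_ne_nil l L), List.head?_cons]
  simp

theorem Chain.rel_get_add_one {a : α} {l : List α} (h : Chain R ((a :: l : List α) : Cycle α))
    (j : Fin (l.length + 1)) : R ((a :: l).get j) ((a :: l).get (j + 1)) := by
  rw [chain_coe_cons, ← List.cons_append, List.isChain_iff_getElem] at h
  have hj := h j (by simpa using j.is_le)
  by_cases hlast : j = Fin.last l.length
  · subst hlast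
    rw [List.getElem_append_left (by simp), List.getElem_append_right (by simp)] at hj
    simpa using hj
  · have hlt : j < Fin.last l.length := lt_of_le_of_ne (Fin.le_last j) hlast
    rw [List.getElem_append_left (by simpa using j.isLt),
      List.getElem_append_left (by simp; omega)] at hj
    simpa [Fin.val_add_one_of_lt hlt] using hj

theorem Chain.imp_of_mem_imp {r₁ r₂ : α → α → Prop} {l : List α}
    (H : ∀ a b, a ∈ l → b ∈ l → r₁ a b → r₂ a b) (h : Chain r₁ (l : Cycle α)) :
    Chain r₂ (l : Cycle α) := by
  cases l with
  | nil => trivial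
  | cons a l =>
    rw [chain_coe_cons] at h ⊢
    exact h.imp_of_mem_imp fun x y hx hy =>
      H x y (by simp at hx ⊢; tauto) (by simp at hy ⊢; tauto)

end Cycle

theorem IsCycleList.of_map {V W : Type} {R : W → W → Prop} {f : V → W} {l : List V}
    (h : IsCycleList R (l.map f)) : IsCycleList (fun a b => R (f a) (f b)) l := by
  cases l with
  | nil => exact h.elim
  | cons a l =>
    obtain ⟨hnd, hc⟩ := h
    refine ⟨List.Nodup.of_map f (l := a :: l) hnd, ?_⟩
    have : (a :: (l ++ [a])).map f = f a :: (l.map f ++ [f a]) := by simp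
    exact (List.isChain_map f).mp (this ▸ hc)

theorem isCycleList_iff {V : Type} {R : V → V → Prop} {l : List V} :
    IsCycleList R l ↔ l ≠ [] ∧ l.Nodup ∧ Cycle.Chain R (l : Cycle V) := by
  cases l with
  | nil => simp [IsCycleList]
  | cons a l => exact ⟨fun h => ⟨List.cons_ne_nil _ _, h⟩, fun h => h.2⟩

namespace List

variable {α β : Type*}

def leftRightBlock (b : List α × List β) : List (α ⊕ β) :=
  b.1.map Sum.inl ++ b.2.map Sum.inr

theorem exists_eq_map_inl_append (l : List (α ⊕ β)) :
    ∃ (A : List α) (r : List (α ⊕ β)),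
      l = A.map Sum.inl ++ r ∧ ∀ x ∈ r.head?, x.isRight := by
  induction l with
  | nil => exact ⟨[], [], rfl, by simp⟩
  | cons x l ih =>
    rcases x with a | b
    · obtain ⟨A, r, rfl, hr⟩ := ih
      exact ⟨a :: A, r, rfl, hr⟩
    · exact ⟨[], Sum.inr b :: l, rfl, by simp⟩

theorem exists_eq_map_inr_append (l : List (α ⊕ β)) :
    ∃ (B : List β) (r : List (α ⊕ β)),
      l = B.map Sum.inr ++ r ∧ ∀ x ∈ r.head?, x.isLeft := by
  induction l with
  | nil => exact ⟨[], [], rfl, by simp⟩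
  | cons x l ih =>
    rcases x with a | b
    · exact ⟨[], Sum.inl a :: l, rfl, by simp⟩
    · obtain ⟨B, r, rfl, hr⟩ := ih
      exact ⟨b :: B, r, rfl, hr⟩

theorem exists_inl_mem_or_eq_map_inr (l : List (α ⊕ β)) :
    (∃ a, Sum.inl a ∈ l) ∨ ∃ B : List β, l = B.map Sum.inr := by
  obtain ⟨B, r, rfl, hr⟩ := exists_eq_map_inr_append l
  rcases r with _ | ⟨a | b, r⟩
  · exact Or.inr ⟨B, append_nil _⟩
  · exact Or.inl ⟨a, by simp⟩
  · simp at hr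

theorem exists_inr_mem_or_eq_map_inl (l : List (α ⊕ β)) :
    (∃ b, Sum.inr b ∈ l) ∨ ∃ A : List α, l = A.map Sum.inl := by
  obtain ⟨A, r, rfl, hr⟩ := exists_eq_map_inl_append l
  rcases r with _ | ⟨a | b, r⟩
  · exact Or.inr ⟨A, append_nil _⟩
  · simp at hr
  · exact Or.inl ⟨b, by simp⟩

theorem eq_nil_of_head?_isLeft_of_head?_isRight {l : List (α ⊕ β)}
    (hl : ∀ x ∈ l.head?, x.isLeft) (hr : ∀ x ∈ l.head?, x.isRight) : l = [] := by
  cases l with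
  | nil => rfl
  | cons x l => exact absurd (hl x rfl) (Sum.not_isLeft.mpr (hr x rfl))

theorem exists_eq_flatMap_leftRightBlock (l : List (α ⊕ β))
    (hhead : ∀ x ∈ l.head?, x.isLeft) (hlast : ∀ x ∈ l.getLast?, x.isRight) :
    ∃ L : List (List α × List β), (∀ b ∈ L, b.1 ≠ [] ∧ b.2 ≠ []) ∧
      l = L.flatMap leftRightBlock := by
  induction hn : l.length using Nat.strong_induction_on generalizing l with
  | _ n ih =>
  subst hn
  obtain ⟨A, r, rfl, hr⟩ := exists_eq_map_inl_append l
  obtain ⟨B, r', rfl, hr'⟩ := exists_eq_map_inr_append r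
  rcases A with _ | ⟨a, A⟩
  · refine ⟨[], by simp, ?_⟩
    simpa using eq_nil_of_head?_isLeft_of_head?_isRight (by simpa using hhead) hr
  rcases B with _ | ⟨b, B⟩
  · obtain rfl : r' = [] := eq_nil_of_head?_isLeft_of_head?_isRight hr' (by simpa using hr)
    rw [map_nil, nil_append, append_nil, getLast?_map,
      getLast?_eq_some_getLast (cons_ne_nil a A)] at hlast
    exact absurd (hlast _ rfl) (by simp)
  have hlast' : ∀ x ∈ r'.getLast?, x.isRight := by
    rcases eq_or_ne r' [] with rfl | hne
    · simp
    · rwa [getLast?_append_of_ne_nil _ (by simp), getLast?_append_of_ne_nil _ hne] at hlast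
  obtain ⟨L, hL, rfl⟩ := ih r'.length (by simp; omega) r' hr' hlast' rfl
  refine ⟨(a :: A, b :: B) :: L, ?_, by simp [leftRightBlock]⟩
  simpa using hL

theorem exists_isRotated_flatMap_leftRightBlock {l : List (α ⊕ β)} (hl : ∃ a, Sum.inl a ∈ l)
    (hr : ∃ b, Sum.inr b ∈ l) :
    ∃ L : List (List α × List β), L ≠ [] ∧ (∀ b ∈ L, b.1 ≠ [] ∧ b.2 ≠ []) ∧
      l ~r L.flatMap leftRightBlock := by
  obtain ⟨a, ha⟩ := hl
  obtain ⟨b, hb⟩ := hr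
  obtain ⟨s, t, rfl⟩ := append_of_mem hb
  -- start at `inr b` and move its leading run of right entries to the end
  obtain ⟨B, r, hBr, hr⟩ := exists_eq_map_inr_append (Sum.inr b :: t ++ s)
  have hrot : s ++ Sum.inr b :: t ~r r ++ B.map Sum.inr :=
    isRotated_append.trans (hBr ▸ isRotated_append)
  obtain ⟨x, r, rfl⟩ : ∃ x r', r = x :: r' := by
    rcases r with _ | ⟨x, r⟩
    · simpa using hrot.mem_iff.mp ha
    · exact ⟨x, r, rfl⟩
  obtain ⟨b', B, rfl⟩ : ∃ b' B', B = b' :: B' := by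
    rcases B with _ | ⟨b', B⟩
    · simp at hBr hr
      simp [← hBr] at hr
    · exact ⟨b', B, rfl⟩
  obtain ⟨L, hL, hq⟩ := exists_eq_flatMap_leftRightBlock (x :: r ++ (b' :: B).map Sum.inr)
    (by simpa using hr)
    (by rw [getLast?_append_of_ne_nil _ (by simp), getLast?_map]; simp)
  refine ⟨L, ?_, hL, hq ▸ hrot⟩
  rintro rfl
  simp at hq

end List

namespace Hamburger

variable {k : ℕ} (H : Hamburger k)

def IsBlock (b : List H.V1 × List H.V2) : Prop :=
  IsPathList H.E1 b.1 ∧ IsPathList H.E2 b.2 ∧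
    ∃ i, b.1.getLast? = some (H.v i) ∧ b.2.head? = some (H.w i)

def Joins (b c : List H.V1 × List H.V2) : Prop :=
  ∃ i, b.2.getLast? = some (H.w i) ∧ c.1.head? = some (H.v i)

theorem exists_inl_mem_of_isCycleList {p : List (H.V1 ⊕ H.V2)} (hp : IsCycleList H.E p) :
    ∃ a, Sum.inl a ∈ p := by
  rcases p.exists_inl_mem_or_eq_map_inr with h | ⟨B, rfl⟩
  · exact h
  · exact (H.acyclic2 B hp.of_map).elim

theorem exists_inr_mem_of_isCycleList {p : List (H.V1 ⊕ H.V2)} (hp : IsCycleList H.E p) :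
    ∃ b, Sum.inr b ∈ p := by
  rcases p.exists_inr_mem_or_eq_map_inl with h | ⟨A, rfl⟩
  · exact h
  · exact (H.acyclic1 A hp.of_map).elim

theorem exists_eq_v_and_eq_w_of_E {x : Option H.V1} {y : Option H.V2} (hx : x ≠ none)
    (hy : y ≠ none) (h : ∀ a ∈ x.map Sum.inl, ∀ b ∈ y.map Sum.inr, H.E a b) :
    ∃ i, x = some (H.v i) ∧ y = some (H.w i) := by
  obtain ⟨a, rfl⟩ := Option.ne_none_iff_exists'.mp hx
  obtain ⟨b, rfl⟩ := Option.ne_none_iff_exists'.mp hy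
  obtain ⟨i, rfl, rfl⟩ := h _ rfl _ rfl
  exact ⟨i, rfl, rfl⟩

theorem exists_eq_w_and_eq_v_of_E {x : Option H.V2} {y : Option H.V1} (hx : x ≠ none)
    (hy : y ≠ none) (h : ∀ a ∈ x.map Sum.inr, ∀ b ∈ y.map Sum.inl, H.E a b) :
    ∃ i, x = some (H.w i) ∧ y = some (H.v i) := by
  obtain ⟨a, rfl⟩ := Option.ne_none_iff_exists'.mp hx
  obtain ⟨b, rfl⟩ := Option.ne_none_iff_exists'.mp hy
  obtain ⟨i, rfl, rfl⟩ := h _ rfl _ rfl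
  exact ⟨i, rfl, rfl⟩

theorem isBlock_of_isChain {b : List H.V1 × List H.V2} (hne : b.1 ≠ [] ∧ b.2 ≠ [])
    (hnd : (List.leftRightBlock b).Nodup) (hc : (List.leftRightBlock b).IsChain H.E) :
    H.IsBlock b := by
  rw [List.leftRightBlock, List.isChain_append, List.isChain_map, List.isChain_map,
    List.getLast?_map, List.head?_map] at hc
  rw [List.leftRightBlock, List.nodup_append] at hnd
  exact ⟨⟨hne.1, hc.1, hnd.1.of_map _⟩, ⟨hne.2, hc.2.1, hnd.2.1.of_map _⟩,
    H.exists_eq_v_and_eq_w_of_E (by simpa using hne.1) (by simpa using hne.2) hc.2.2⟩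

theorem joins_of_forall_E {b c : List H.V1 × List H.V2} (hb : b.2 ≠ []) (hc : c.1 ≠ [])
    (h : ∀ x ∈ (List.leftRightBlock b).getLast?, ∀ y ∈ (List.leftRightBlock c).head?,
      H.E x y) :
    H.Joins b c := by
  rw [List.leftRightBlock, List.leftRightBlock, List.getLast?_append_of_ne_nil _ (by simpa),
    List.head?_append_of_ne_nil _ (by simpa), List.getLast?_map, List.head?_map] at h
  exact H.exists_eq_w_and_eq_v_of_E (by simpa using hb) (by simpa using hc) h

theorem exists_isRotated_flatMap_isBlock {p : List (H.V1 ⊕ H.V2)} (hp : IsCycleList H.E p) :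
    ∃ b L, p ~r (b :: L).flatMap List.leftRightBlock ∧ (∀ c ∈ b :: L, H.IsBlock c) ∧
      Cycle.Chain H.Joins ((b :: L : List _) : Cycle _) := by
  obtain ⟨-, hnd, hc⟩ := isCycleList_iff.mp hp
  obtain ⟨_ | ⟨b, L⟩, hne, hL, hrot⟩ :=
    List.exists_isRotated_flatMap_leftRightBlock (H.exists_inl_mem_of_isCycleList hp)
      (H.exists_inr_mem_of_isCycleList hp)
  · contradiction
  rw [hrot.nodup_iff, List.nodup_flatMap] at hnd
  have hnil : [] ∉ (b :: L).map List.leftRightBlock := by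
    simp only [List.mem_map, not_exists, not_and]
    intro c hc h
    simp [List.leftRightBlock, (hL c hc).1] at h
  rw [Cycle.coe_eq_coe.mpr hrot, List.flatMap_def, Cycle.chain_coe_flatten hnil,
    ← Cycle.map_coe, Cycle.chain_map] at hc
  refine ⟨b, L, hrot, fun c hc' => H.isBlock_of_isChain (hL c hc') (hnd.1 c hc')
    (hc.1 _ (List.mem_map_of_mem hc')), hc.2.imp_of_mem_imp fun c d hc' hd' h => ?_⟩
  exact H.joins_of_forall_E (hL c hc').2 (hL d hd').1 h

end Hamburger

theorem cycle_decomposition_general {k : ℕ} (H : Hamburger k)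
    (p : List (H.V1 ⊕ H.V2)) (hp : IsCycleList H.E p) :
    (∃ i : Fin k, p.IsRotated [Sum.inl (H.v i), Sum.inr (H.w i)]) ∨
      ∃ (m : ℕ) (P : Fin (m + 1) → List H.V1) (Q : Fin (m + 1) → List H.V2),
        (∀ j, IsPathList H.E1 (P j)) ∧ (∀ j, IsPathList H.E2 (Q j)) ∧
        (∀ j, ∃ i : Fin k, (P j).getLast? = some (H.v i) ∧ (Q j).head? = some (H.w i)) ∧
        (∀ j, ∃ i : Fin k, (Q j).getLast? = some (H.w i) ∧ (P (j + 1)).head? = some (H.v i)) ∧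
        p.IsRotated ((List.finRange (m + 1)).flatMap fun j =>
          (P j).map Sum.inl ++ (Q j).map Sum.inr) := by
  obtain ⟨b, L, hrot, hblocks, hjoins⟩ := H.exists_isRotated_flatMap_isBlock hp
  refine Or.inr ⟨L.length, fun j => ((b :: L).get j).1, fun j => ((b :: L).get j).2,
    fun j => (hblocks _ (List.get_mem _ _)).1, fun j => (hblocks _ (List.get_mem _ _)).2.1,
    fun j => (hblocks _ (List.get_mem _ _)).2.2, hjoins.rel_get_add_one, ?_⟩
  rwa [← List.map_get_finRange (b :: L), List.flatMap_map] at hrot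

/-- Every directed cycle of a hamburger graph is either a 2-cycle `v i → w i → v i`, or
decomposes as an alternating cyclic sequence `P 0 → Q 0 → P 1 → Q 1 → ⋯ → P m → Q m`
(with `m + 1 ≥ 1` blocks) where each `P j` is a directed path in `G1`, each `Q j` is a
directed path in `G2`, each `P j` is joined to `Q j` by an edge `v i → w i` of `E3`,
and each `Q j` is joined to `P (j+1)` (cyclically, so the last `Q` is joined to `P 0`)
by an edge `w i → v i` of `E3`. -/
theorem cycle_decomposition {k : ℕ} (hk : 1 ≤ k) (H : Hamburger k)
    (p : List (H.V1 ⊕ H.V2)) (hp : IsCycleList H.E p) :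
    (∃ i : Fin k, p.IsRotated [Sum.inl (H.v i), Sum.inr (H.w i)]) ∨
      ∃ (m : ℕ) (P : Fin (m + 1) → List H.V1) (Q : Fin (m + 1) → List H.V2),
        (∀ j, IsPathList H.E1 (P j)) ∧ (∀ j, IsPathList H.E2 (Q j)) ∧
        (∀ j, ∃ i : Fin k, (P j).getLast? = some (H.v i) ∧ (Q j).head? = some (H.w i)) ∧
        (∀ j, ∃ i : Fin k, (Q j).getLast? = some (H.w i) ∧ (P (j + 1)).head? = some (H.v i)) ∧
        p.IsRotated ((List.finRange (m + 1)).flatMap fun j =>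
          (P j).map Sum.inl ++ (Q j).map Sum.inr) :=
  cycle_decomposition_general H p hp
end

section
/- For every n ≥ 1, the digraph D_n of the Aztec diamond AD_n is a hamburger graph with parameter n: the subgraph induced on the upper-half vertices is acyclic and admits a directed path from v_i to v_j only if i < j, the subgraph induced on the lower-half vertices is acyclic and admits a directed path from w_{n+i} to w_{n+j} only if i > j, and the remaining edges are exactly v_i → w_{n+i} and w_{n+i} → v_i for 1 ≤ i ≤ n. -/
/-- Two unit squares of the plane (indexed by their lower-left corners) are
edge-adjacent. -/
def SqAdj (p q : ℤ × ℤ) : Prop :=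
  (q.1 = p.1 + 1 ∧ q.2 = p.2) ∨ (q.1 = p.1 - 1 ∧ q.2 = p.2) ∨
    (q.1 = p.1 ∧ q.2 = p.2 + 1) ∨ (q.1 = p.1 ∧ q.2 = p.2 - 1)

/-- A domino tiling of a region `S` (a set of unit squares, each indexed by its
lower-left corner): a partition of the squares of `S` into dominoes, i.e. pairs of
edge-adjacent squares; it is encoded by the involution `m` matching each square of `S`
with the other square of its domino (normalized to be the identity off `S`). -/
def IsDominoTiling (S : Set (ℤ × ℤ)) (m : ℤ × ℤ → ℤ × ℤ) : Prop :=
  (∀ p ∈ S, m p ∈ S ∧ m (m p) = p ∧ SqAdj p (m p)) ∧ ∀ p, p ∉ S → m p = p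

/-- The number of domino tilings of the region `S`. -/
noncomputable def numTilings (S : Set (ℤ × ℤ)) : ℕ :=
  Nat.card {m : ℤ × ℤ → ℤ × ℤ // IsDominoTiling S m}

/-- The Aztec diamond `AD n`, as the set of the unit squares, indexed by their lower-left
corners, all of whose corners `(a, b)` satisfy `|a| + |b| ≤ n + 1`. -/
def ADset (n : ℕ) : Set (ℤ × ℤ) :=
  {p | |p.1| + |p.2| ≤ (n : ℤ) + 1 ∧ |p.1 + 1| + |p.2| ≤ (n : ℤ) + 1 ∧
       |p.1| + |p.2 + 1| ≤ (n : ℤ) + 1 ∧ |p.1 + 1| + |p.2 + 1| ≤ (n : ℤ) + 1}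

/-- The vertices of the digraph `D n` of the Aztec diamond `AD n`: one vertex at the
center of each horizontal domino of the natural tiling of `AD n`; the domino is indexed
by its left square `p`, so that it consists of the squares `p` and `(p.1 + 1, p.2)` of
`AD n`, and the parity condition singles out the dominoes of the natural tiling (in each
row of `AD n` the dominoes of the natural tiling cover the row from its west end). -/
def adVertex (n : ℕ) (p : ℤ × ℤ) : Prop :=
  p ∈ ADset n ∧ (p.1 + 1, p.2) ∈ ADset n ∧
    Even (p.1 + (n : ℤ) + 1 + max |p.2| |p.2 + 1|)

/-- The edges of the digraph `D n` of the Aztec diamond `AD n`.  From each vertex of the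
upper half (dominoes in the half-plane `y > 0`, i.e. rows `p.2 ≥ 0`) there are edges to
the vertices immediately east, northeast and southeast of it (whenever these are
vertices); from each vertex of the lower half there are edges to the vertices
immediately west, southwest and northwest of it; and for each of the `n` vertices
`v i = (-n + 2i, 0)` of the lowest row of the upper half there are edges
`v i → w i` and `w i → v i` to and from the vertex `w i = (-n + 2i, -1)` of the
highest row of the lower half directly below it. -/
def adEdge (n : ℕ) (p q : ℤ × ℤ) : Prop :=
  adVertex n p ∧ adVertex n q ∧
    ((0 ≤ p.2 ∧ (q = (p.1 + 2, p.2) ∨ q = (p.1 + 1, p.2 + 1) ∨ q = (p.1 + 1, p.2 - 1))) ∨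
     (p.2 < 0 ∧ (q = (p.1 - 2, p.2) ∨ q = (p.1 - 1, p.2 - 1) ∨ q = (p.1 - 1, p.2 + 1))) ∨
     (p.2 = 0 ∧ q = (p.1, -1)) ∨
     (p.2 = -1 ∧ q = (p.1, 0)))

/-- The upper half of the digraph of the Aztec diamond: edges of `D n` joining two
vertices of the upper half. -/
def upperE (n : ℕ) (p q : ℤ × ℤ) : Prop := adEdge n p q ∧ 0 ≤ p.2 ∧ 0 ≤ q.2

/-- The lower half of the digraph of the Aztec diamond. -/
def lowerE (n : ℕ) (p q : ℤ × ℤ) : Prop := adEdge n p q ∧ p.2 < 0 ∧ q.2 < 0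

/-- The distinguished vertex `v i` (for `i = 1, …, n`, west to east) of the digraph of
the Aztec diamond: the `i`-th vertex of the lowest row of the upper half. -/
def adV (n : ℕ) (i : Fin n) : ℤ × ℤ := (-(n : ℤ) + 2 * (i : ℕ), 0)

/-- The distinguished vertex `w i` (i.e. `w_{n+i}`, for `i = 1, …, n`, west to east) of
the digraph of the Aztec diamond: the `i`-th vertex of the highest row of the lower
half. -/
def adW (n : ℕ) (i : Fin n) : ℤ × ℤ := (-(n : ℤ) + 2 * (i : ℕ), -1)

/-!
Edges of the upper half move strictly east and edges of the lower half strictly west, so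
the abscissa is a strictly monotone potential on each half: this rules out directed cycles
and orders the distinguished vertices along any directed path. In the two middle rows the
vertices of `D n` are exactly the `v i` and the `w i`, with abscissas `≡ n (mod 2)`, so the
only edges between the halves are the vertical ones; a diagonal edge between the middle
rows would join abscissas of different parity.
-/

section Potential

variable {V : Type} {α : Type*} [Preorder α] {R : V → V → Prop} {f : V → α}

theorem List.IsChain.potential_lt (hR : ∀ x y, R x y → f x < f y) {a b : V} {l : List V}
    (h : (a :: l).IsChain R) (hb : b ∈ l) : f a < f b :=
  ((List.isChain_cons_map f).2 (h.imp hR)).rel_cons (List.mem_map_of_mem hb)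

theorem not_isCycleList_of_potential (hR : ∀ x y, R x y → f x < f y) (p : List V) :
    ¬ IsCycleList R p := by
  rintro hp
  cases p with
  | nil => exact hp
  | cons a l =>
    obtain ⟨-, hchain⟩ := hp
    exact lt_irrefl _ (List.IsChain.potential_lt hR hchain (by simp))

theorem IsDirPath.potential_lt (hR : ∀ x y, R x y → f x < f y) {a b : V} {p : List V}
    (h : IsDirPath R a b p) (hab : a ≠ b) : f a < f b := by
  obtain ⟨hchain, hhead, hlast, -⟩ := h
  obtain ⟨t, rfl⟩ : ∃ t, p = a :: t := by
    cases p with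
    | nil => simp at hhead
    | cons x t => exact ⟨t, by simpa using hhead⟩
  have hb : b ∈ t := (List.mem_cons.1 (List.mem_of_getLast? hlast)).resolve_left hab.symm
  exact List.IsChain.potential_lt hR hchain hb

end Potential

section AztecDigraph

variable {n : ℕ}

theorem adVertex_middle_row_iff {x y : ℤ} (hy : y = 0 ∨ y = -1) :
    adVertex n (x, y) ↔ ∃ i : Fin n, -(n : ℤ) + 2 * (i : ℕ) = x := by
  have hrow : adVertex n (x, y) ↔ -(n : ℤ) ≤ x ∧ x + 2 ≤ n ∧ (x + n) % 2 = 0 := by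
    rcases hy with rfl | rfl <;>
      simp only [adVertex, ADset, Set.mem_ofPred_eq, Int.even_iff, Int.abs_eq_natAbs] <;>
      omega
  rw [hrow]
  constructor
  · rintro ⟨hlo, hhi, heven⟩
    exact ⟨⟨((x + n) / 2).toNat, by omega⟩, by simp only; omega⟩
  · rintro ⟨i, rfl⟩
    have := i.isLt
    omega

theorem adVertex_row_zero_iff {x : ℤ} : adVertex n (x, 0) ↔ ∃ i, adV n i = (x, 0) := by
  simp [adVertex_middle_row_iff, adV]

theorem adVertex_row_neg_one_iff {x : ℤ} : adVertex n (x, -1) ↔ ∃ i, adW n i = (x, -1) := by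
  simp [adVertex_middle_row_iff, adW]

theorem adVertex_adV (i : Fin n) : adVertex n (adV n i) :=
  adVertex_row_zero_iff.2 ⟨i, rfl⟩

theorem adVertex_adW (i : Fin n) : adVertex n (adW n i) :=
  adVertex_row_neg_one_iff.2 ⟨i, rfl⟩

theorem adV_fst_lt_adV_fst_iff {i j : Fin n} : (adV n i).1 < (adV n j).1 ↔ i < j := by
  rw [Fin.lt_def]
  simp [adV]

theorem adW_fst_lt_adW_fst_iff {i j : Fin n} : (adW n i).1 < (adW n j).1 ↔ i < j := by
  rw [Fin.lt_def]
  simp [adW]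

theorem adV_injective : Function.Injective (adV n) := fun i j h => by
  simpa [adV, Fin.ext_iff] using h

theorem adW_injective : Function.Injective (adW n) := fun i j h => by
  simpa [adW, Fin.ext_iff] using h

theorem upperE_fst_lt {p q : ℤ × ℤ} (h : upperE n p q) : p.1 < q.1 := by
  obtain ⟨⟨-, -, hc⟩, hp2, hq2⟩ := h
  rcases hc with ⟨-, rfl | rfl | rfl⟩ | ⟨h, -⟩ | ⟨h, rfl⟩ | ⟨h, -⟩ <;> omega

theorem lowerE_fst_lt {p q : ℤ × ℤ} (h : lowerE n p q) : q.1 < p.1 := by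
  obtain ⟨⟨-, -, hc⟩, hp2, hq2⟩ := h
  rcases hc with ⟨h, -⟩ | ⟨-, rfl | rfl | rfl⟩ | ⟨h, rfl⟩ | ⟨h, rfl⟩ <;> omega

theorem adEdge_between_halves {p q : ℤ × ℤ} (h : adEdge n p q)
    (hcross : (0 ≤ p.2 ∧ q.2 < 0) ∨ (p.2 < 0 ∧ 0 ≤ q.2)) :
    ∃ i : Fin n, (p = adV n i ∧ q = adW n i) ∨ (p = adW n i ∧ q = adV n i) := by
  obtain ⟨x, y⟩ := p
  obtain ⟨hp, hq, hc⟩ := h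
  rcases hc with ⟨hy, rfl | rfl | rfl⟩ | ⟨hy, rfl | rfl | rfl⟩ | ⟨rfl, rfl⟩ | ⟨rfl, rfl⟩ <;>
    try omega
  · obtain rfl : y = 0 := by omega
    obtain ⟨i, hi⟩ := adVertex_row_zero_iff.1 hp
    obtain ⟨j, hj⟩ := adVertex_row_neg_one_iff.1 (by simpa using hq)
    simp only [adV, adW, Prod.ext_iff] at hi hj
    omega
  · obtain rfl : y = -1 := by omega
    obtain ⟨i, hi⟩ := adVertex_row_neg_one_iff.1 hp
    obtain ⟨j, hj⟩ := adVertex_row_zero_iff.1 (by simpa using hq)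
    simp only [adV, adW, Prod.ext_iff] at hi hj
    omega
  · obtain ⟨i, hi⟩ := adVertex_row_zero_iff.1 hp
    exact ⟨i, Or.inl ⟨hi.symm, by simp_all [adV, adW, Prod.ext_iff]⟩⟩
  · obtain ⟨i, hi⟩ := adVertex_row_neg_one_iff.1 hp
    exact ⟨i, Or.inr ⟨hi.symm, by simp_all [adV, adW, Prod.ext_iff]⟩⟩

end AztecDigraph

theorem aztec_digraph_is_hamburger_general (n : ℕ) :
    (∀ i : Fin n, adVertex n (adV n i) ∧ adVertex n (adW n i)) ∧
    (∀ p : List (ℤ × ℤ), ¬ IsCycleList (upperE n) p) ∧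
    (∀ i j : Fin n, i ≠ j → (∃ p, IsDirPath (upperE n) (adV n i) (adV n j) p) → i < j) ∧
    (∀ p : List (ℤ × ℤ), ¬ IsCycleList (lowerE n) p) ∧
    (∀ i j : Fin n, i ≠ j → (∃ p, IsDirPath (lowerE n) (adW n i) (adW n j) p) → j < i) ∧
    (∀ p q : ℤ × ℤ, adEdge n p q →
      ((0 ≤ p.2 ∧ q.2 < 0) ∨ (p.2 < 0 ∧ 0 ≤ q.2)) →
      ∃ i : Fin n, (p = adV n i ∧ q = adW n i) ∨ (p = adW n i ∧ q = adV n i)) := by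
  have upper_mono : ∀ p q, upperE n p q → p.1 < q.1 := fun _ _ => upperE_fst_lt
  have lower_mono : ∀ p q, lowerE n p q → OrderDual.toDual p.1 < OrderDual.toDual q.1 :=
    fun _ _ h => OrderDual.toDual_lt_toDual.2 (lowerE_fst_lt h)
  refine ⟨fun i => ⟨adVertex_adV i, adVertex_adW i⟩,
    not_isCycleList_of_potential upper_mono, ?_,
    not_isCycleList_of_potential lower_mono, ?_,
    fun p q => adEdge_between_halves⟩
  · rintro i j hij ⟨p, hp⟩
    exact adV_fst_lt_adV_fst_iff.1 (hp.potential_lt upper_mono (adV_injective.ne hij))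
  · rintro i j hij ⟨p, hp⟩
    exact adW_fst_lt_adW_fst_iff.1 (hp.potential_lt lower_mono (adW_injective.ne hij))

/-- The digraph `D n` of the Aztec diamond `AD n` is a hamburger graph with parameter
`n`: its distinguished vertices `v i` and `w i` are vertices; the subgraph induced on the
upper-half vertices is acyclic and admits a directed path from `v i` to `v j` only if
`i < j`; the subgraph induced on the lower-half vertices is acyclic and admits a directed
path from `w i` to `w j` only if `i > j`; and the edges between the two halves are
exactly the edges `v i → w i` and `w i → v i` for `1 ≤ i ≤ n`. -/
theorem aztec_digraph_is_hamburger (n : ℕ) (hn : 1 ≤ n) :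
    (∀ i : Fin n, adVertex n (adV n i) ∧ adVertex n (adW n i)) ∧
    (∀ p : List (ℤ × ℤ), ¬ IsCycleList (upperE n) p) ∧
    (∀ i j : Fin n, i ≠ j → (∃ p, IsDirPath (upperE n) (adV n i) (adV n j) p) → i < j) ∧
    (∀ p : List (ℤ × ℤ), ¬ IsCycleList (lowerE n) p) ∧
    (∀ i j : Fin n, i ≠ j → (∃ p, IsDirPath (lowerE n) (adW n i) (adW n j) p) → j < i) ∧
    (∀ p q : ℤ × ℤ, adEdge n p q →
      ((0 ≤ p.2 ∧ q.2 < 0) ∨ (p.2 < 0 ∧ 0 ≤ q.2)) →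
      ∃ i : Fin n, (p = adV n i ∧ q = adW n i) ∨ (p = adW n i ∧ q = adV n i)) :=
  aztec_digraph_is_hamburger_general n
end

section
/- For every n ≥ 1 and all 1 ≤ i ≤ j ≤ n, the number of directed paths from v_i to v_j in the upper half of the digraph D_n of the Aztec diamond AD_n equals the large Schröder number s_{j−i}, defined as the number of lattice paths from (0,0) to (j−i, j−i) using steps (1,0), (0,1), and (1,1) that never pass above the line y = x. -/
/-- A step of a Schröder lattice path: east `(1,0)`, north `(0,1)`, or diagonal
`(1,1)`. -/
def SchroderStep (s : ℤ × ℤ) : Prop := s = (1, 0) ∨ s = (0, 1) ∨ s = (1, 1)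

/-- `p` (a list of steps) is a lattice path from `(0,0)` to `(m,m)` using steps `(1,0)`,
`(0,1)` and `(1,1)` that never passes above the line `y = x`. -/
def IsSchroderPath (m : ℕ) (p : List (ℤ × ℤ)) : Prop :=
  (∀ s ∈ p, SchroderStep s) ∧
    (∀ t : ℕ, ((p.take t).sum).2 ≤ ((p.take t).sum).1) ∧
    p.sum = ((m : ℤ), (m : ℤ))

/-- The `m`-th large Schröder number: the number of lattice paths from `(0,0)` to
`(m,m)` using steps `(1,0)`, `(0,1)` and `(1,1)` that never pass above the line
`y = x`. -/
noncomputable def schroder (m : ℕ) : ℕ :=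
  Nat.card {p : List (ℤ × ℤ) // IsSchroderPath m p}

/-! The map `(h, k) ↦ (h + k, h - k)` turns the east, north and diagonal steps of Schröder
paths into the northeast, southeast and east moves of the upper half of `D n`, and the
condition of staying weakly below the diagonal into that of staying in the upper half. A path
from `v i` is determined by its sequence of moves (every move increases `x`, so walks never
repeat a vertex), and the lattice points `0 ≤ k ≤ h ≤ j - i`
visited by a Schröder path to `(j - i, j - i)` land on vertices of the upper half, so
Schröder paths and paths from `v i` to `v j` correspond bijectively. -/

open List

def toDiamond : ℤ × ℤ →+ ℤ × ℤ :=
  AddMonoidHom.mk' (fun u => (u.1 + u.2, u.1 - u.2)) fun u v => by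
    ext <;> simp only [Prod.fst_add, Prod.snd_add] <;> ring

lemma toDiamond_apply (u : ℤ × ℤ) : toDiamond u = (u.1 + u.2, u.1 - u.2) := rfl

lemma toDiamond_injective : Function.Injective toDiamond := by
  intro u v h
  simp only [toDiamond_apply, Prod.mk.injEq] at h
  ext <;> omega

def diamondWalk (a : ℤ × ℤ) (q : List (ℤ × ℤ)) : List (ℤ × ℤ) :=
  q.scanl (fun v s => v + toDiamond s) a

section diamondWalk

variable (a : ℤ × ℤ) (q : List (ℤ × ℤ))

lemma diamondWalk_cons (s : ℤ × ℤ) :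
    diamondWalk a (s :: q) = a :: diamondWalk (a + toDiamond s) q :=
  scanl_cons

lemma foldl_add_toDiamond : q.foldl (fun v s => v + toDiamond s) a = a + toDiamond q.sum := by
  induction q generalizing a with
  | nil => simp
  | cons s q ih => rw [foldl_cons, ih, sum_cons, map_add, add_assoc]

lemma head?_diamondWalk : (diamondWalk a q).head? = some a := head?_scanl

lemma getLast?_diamondWalk : (diamondWalk a q).getLast? = some (a + toDiamond q.sum) := by
  rw [diamondWalk, getLast?_scanl, foldl_add_toDiamond]

lemma length_diamondWalk : (diamondWalk a q).length = q.length + 1 := length_scanl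

lemma getElem_diamondWalk {t : ℕ} (ht : t < (diamondWalk a q).length) :
    (diamondWalk a q)[t] = a + toDiamond (q.take t).sum := by
  simp only [diamondWalk, getElem_scanl, foldl_add_toDiamond]

lemma add_toDiamond_sum_take_mem (t : ℕ) : a + toDiamond (q.take t).sum ∈ diamondWalk a q := by
  rw [take_eq_take_min, ← getElem_diamondWalk a q (by rw [length_diamondWalk]; omega)]
  exact getElem_mem _

lemma isChain_diamondWalk {R : ℤ × ℤ → ℤ × ℤ → Prop}
    (h : ∀ t < q.length, R (a + toDiamond (q.take t).sum) (a + toDiamond (q.take (t + 1)).sum)) :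
    (diamondWalk a q).IsChain R := by
  rw [isChain_iff_getElem]
  intro t ht
  rw [getElem_diamondWalk, getElem_diamondWalk]
  exact h t (by rw [length_diamondWalk] at ht; omega)

lemma diamondWalk_injective : Function.Injective (diamondWalk a) := by
  intro q q' h
  induction q generalizing a q' with
  | nil => cases q' <;> simp_all [diamondWalk, scanl_cons]
  | cons s q ih =>
    cases q' with
    | nil => simp_all [diamondWalk, scanl_cons]
    | cons s' q' =>
      rw [diamondWalk_cons, diamondWalk_cons, cons.injEq] at h
      have hs : s = s' := by
        simpa [head?_diamondWalk, toDiamond_injective.eq_iff] using congrArg head? h.2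
      subst hs
      rw [ih _ h.2]

end diamondWalk

lemma SchroderStep.nonneg {s : ℤ × ℤ} (hs : SchroderStep s) : 0 ≤ s := by
  rcases hs with rfl | rfl | rfl <;> simp [Prod.le_def]

lemma IsSchroderPath.sum_take_mem_Icc {m : ℕ} {q : List (ℤ × ℤ)} (hq : IsSchroderPath m q)
    (t : ℕ) : (q.take t).sum ∈ Set.Icc 0 ((m : ℤ), (m : ℤ)) := by
  have hnonneg : ∀ s ∈ q, 0 ≤ s := fun s hs => (hq.1 s hs).nonneg
  refine ⟨sum_nonneg fun s hs => hnonneg s (mem_of_mem_take hs), ?_⟩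
  rw [← hq.2.2]
  exact (take_sublist t q).sum_le_sum hnonneg

section AztecDiamond

variable {n : ℕ}

lemma upperE_iff {a b : ℤ × ℤ} :
    upperE n a b ↔ adVertex n a ∧ adVertex n b ∧ 0 ≤ a.2 ∧ 0 ≤ b.2 ∧
      ∃ s, SchroderStep s ∧ b = a + toDiamond s := by
  obtain ⟨x, y⟩ := a
  simp only [upperE, adEdge, SchroderStep, toDiamond_apply]
  constructor
  · rintro ⟨⟨ha, hb, hab⟩, hy, hy'⟩
    refine ⟨ha, hb, hy, hy', ?_⟩
    rcases hab with ⟨-, rfl | rfl | rfl⟩ | ⟨h, -⟩ | ⟨-, rfl⟩ | ⟨h, -⟩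
    · exact ⟨(1, 1), by simp, by simp⟩
    · exact ⟨(1, 0), by simp, by simp⟩
    · exact ⟨(0, 1), by simp, by simp [sub_eq_add_neg]⟩
    · omega
    · simp at hy'
    · omega
  · rintro ⟨ha, hb, hy, hy', s, hs, rfl⟩
    refine ⟨⟨ha, hb, Or.inl ⟨hy, ?_⟩⟩, hy, hy'⟩
    rcases hs with rfl | rfl | rfl <;> simp [sub_eq_add_neg]

lemma fst_lt_of_upperE {a b : ℤ × ℤ} (h : upperE n a b) : a.1 < b.1 := by
  obtain ⟨-, -, -, -, s, hs, rfl⟩ := upperE_iff.1 h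
  rcases hs with rfl | rfl | rfl <;> simp [toDiamond_apply]

lemma nodup_of_isChain_upperE {p : List (ℤ × ℤ)} (hp : p.IsChain (upperE n)) : p.Nodup := by
  have : (p.map Prod.fst).IsChain (· < ·) := (isChain_map _).2 (hp.imp fun _ _ => fst_lt_of_upperE)
  exact (sortedLT_iff_isChain.2 this).nodup.of_map _

lemma adVertex_adV_add_toDiamond (i : Fin n) {u : ℤ × ℤ} (hk : 0 ≤ u.2) (hdiag : u.2 ≤ u.1)
    (hlt : (i : ℤ) + u.1 < n) : adVertex n (adV n i + toDiamond u) := by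
  obtain ⟨h, k⟩ := u
  dsimp only at hk hdiag hlt
  simp only [adVertex, ADset, adV, toDiamond_apply, Prod.mk_add_mk, Set.mem_ofPred_eq, zero_add]
  rw [abs_of_nonneg (by omega : 0 ≤ h - k), abs_of_nonneg (by omega : 0 ≤ h - k + 1),
    max_eq_right (by omega)]
  refine ⟨⟨?_, ?_, ?_, ?_⟩, ⟨?_, ?_, ?_, ?_⟩, ⟨(i : ℤ) + h + 1, by ring⟩⟩ <;>
    · rw [← le_sub_iff_add_le, abs_le]
      constructor <;> omega

lemma adV_eq_adV_add_toDiamond {i j : Fin n} (hij : i ≤ j) :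
    adV n j = adV n i + toDiamond (((j - i : ℕ) : ℤ), ((j - i : ℕ) : ℤ)) := by
  have : (i : ℕ) ≤ j := hij
  simp only [adV, toDiamond_apply, Prod.mk_add_mk, Prod.mk.injEq]
  omega

lemma exists_diamondWalk_eq {a : ℤ × ℤ} :
    ∀ {p : List (ℤ × ℤ)}, p.IsChain (upperE n) → p.head? = some a →
      ∃ q, (∀ s ∈ q, SchroderStep s) ∧ diamondWalk a q = p
  | [b], _, h => ⟨[], by simp, by cases h; rfl⟩
  | b :: c :: p, hp, h => by
    obtain ⟨hbc, hp⟩ := isChain_cons_cons.1 hp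
    obtain ⟨-, -, -, -, s, hs, rfl⟩ := upperE_iff.1 hbc
    obtain ⟨q, hq, hpq⟩ := exists_diamondWalk_eq hp rfl
    cases h
    exact ⟨s :: q, forall_mem_cons.2 ⟨hs, hq⟩, by rw [diamondWalk_cons, hpq]⟩

lemma IsSchroderPath.adVertex_adV_add_toDiamond_sum_take {m : ℕ} {q : List (ℤ × ℤ)}
    (hq : IsSchroderPath m q) {i : Fin n} (hm : (i : ℕ) + m < n) (t : ℕ) :
    adVertex n (adV n i + toDiamond (q.take t).sum) ∧
      0 ≤ (adV n i + toDiamond (q.take t).sum).2 := by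
  obtain ⟨h0, hm'⟩ := hq.sum_take_mem_Icc t
  rw [Prod.le_def] at h0 hm'
  refine ⟨adVertex_adV_add_toDiamond i h0.2 (hq.2.1 t) ?_, ?_⟩
  · dsimp only at hm'
    omega
  · simpa [adV, toDiamond_apply] using hq.2.1 t

lemma IsSchroderPath.isChain_upperE_diamondWalk {m : ℕ} {q : List (ℤ × ℤ)}
    (hq : IsSchroderPath m q) {i : Fin n} (hm : (i : ℕ) + m < n) :
    (diamondWalk (adV n i) q).IsChain (upperE n) :=
  isChain_diamondWalk _ _ fun t ht => by
    have hcur := hq.adVertex_adV_add_toDiamond_sum_take hm t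
    have hnext := hq.adVertex_adV_add_toDiamond_sum_take hm (t + 1)
    rw [sum_take_succ _ _ ht, map_add, ← add_assoc] at hnext ⊢
    exact upperE_iff.2 ⟨hcur.1, hnext.1, hcur.2, hnext.2, q[t], hq.1 _ (getElem_mem ht), rfl⟩

lemma isDirPath_diamondWalk_iff {i j : Fin n} (hij : i ≤ j) {q : List (ℤ × ℤ)}
    (hq : ∀ s ∈ q, SchroderStep s) :
    IsDirPath (upperE n) (adV n i) (adV n j) (diamondWalk (adV n i) q) ↔
      IsSchroderPath (j - i) q := by
  have hend : (diamondWalk (adV n i) q).getLast? = some (adV n j) ↔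
      q.sum = (((j - i : ℕ) : ℤ), ((j - i : ℕ) : ℤ)) := by
    rw [getLast?_diamondWalk, adV_eq_adV_add_toDiamond hij, Option.some_inj, add_right_inj,
      toDiamond_injective.eq_iff]
  constructor
  · rintro ⟨hchain, -, hlast, -⟩
    refine ⟨hq, fun t => ?_, hend.1 hlast⟩
    have hrow := hchain.induction (fun v => 0 ≤ v.2) _ (fun _ _ h _ => h.2.2)
      (by simp [diamondWalk, adV]) _ (add_toDiamond_sum_take_mem _ q t)
    simpa [adV, toDiamond_apply] using hrow
  · intro hS
    have hchain := hS.isChain_upperE_diamondWalk (i := i) (by have := j.isLt; omega)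
    exact ⟨hchain, head?_diamondWalk _ _, hend.2 hS.2.2, nodup_of_isChain_upperE hchain⟩

end AztecDiamond

theorem aztec_paths_eq_schroder_general (n : ℕ) (i j : Fin n) (hij : i ≤ j) :
    numPaths (upperE n) (adV n i) (adV n j) = schroder ((j : ℕ) - (i : ℕ)) := by
  let walk (q : {q // IsSchroderPath (j - i) q}) :
      {p // IsDirPath (upperE n) (adV n i) (adV n j) p} :=
    ⟨diamondWalk (adV n i) q.1, (isDirPath_diamondWalk_iff hij q.2.1).2 q.2⟩
  have hinj : walk.Injective := fun q q' h =>
    Subtype.ext (diamondWalk_injective _ (congrArg Subtype.val h))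
  have hsurj : walk.Surjective := by
    rintro ⟨p, hp⟩
    obtain ⟨q, hq, rfl⟩ := exists_diamondWalk_eq hp.1 hp.2.1
    exact ⟨⟨q, (isDirPath_diamondWalk_iff hij hq).1 hp⟩, rfl⟩
  exact (Nat.card_eq_of_bijective walk ⟨hinj, hsurj⟩).symm

/-- For all `1 ≤ i ≤ j ≤ n`, the number of directed paths from `v i` to `v j` in the
upper half of the digraph `D n` of the Aztec diamond `AD n` equals the large Schröder
number `s (j - i)`. -/
theorem aztec_paths_eq_schroder (n : ℕ) (hn : 1 ≤ n) (i j : Fin n) (hij : i ≤ j) :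
    numPaths (upperE n) (adV n i) (adV n j) = schroder ((j : ℕ) - (i : ℕ)) :=
  aztec_paths_eq_schroder_general n i j hij
end
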